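/- The function c_2(u) = N_2(u)/u^{θ_2}, where N_2(u) = #{(m,n): m ≥ n ≥ 0, C(m,n) odd, m+n < u} and θ_2 = log 3/log 2, does not converge as u → ∞; in fact lim_{k→∞} c_2(2^k) = 1/2 and lim_{k→∞} c_2(3·2^k) = 3^{1−θ_2}, and these two values are distinct. -/

import Mathlib

/-!
By Lucas' theorem, `C(m, n)` is odd iff `n % 2 ≤ m % 2` and `C(m / 2, n / 2)` is odd, which makes
the odd pairs self-similar: `N₂(u) = N₂(⌈u/2⌉) + N₂(⌊u/2⌋) + N₂(⌊(u-1)/2⌋)`. Along `u = 2^k v` the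
pair `(N₂(u), N₂(u - 1))` is therefore multiplied by `[[2, 1], [1, 2]]`, whose eigenvalues are `3`
and `1`; since `(2^k v)^θ₂ = 3^k v^θ₂`, this gives `c₂(2^k v) → (N₂(v) + N₂(v - 1)) / (2 v^θ₂)`.
Taking `v = 1` and `v = 3` yields `1/2` and `3^{1-θ₂}`. These differ: equality would force
`θ₂² = θ₂ + 1`, whereas `3^5 < 2^8` gives `θ₂ < 8/5`, below the golden ratio.
-/

open Filter

/-- `N₂(u)`: number of odd binomial coefficients with `m ≥ n` and `m + n < u`. -/
noncomputable def N2 (u : ℕ) : ℕ :=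
  {mn : ℕ × ℕ | mn.2 ≤ mn.1 ∧ mn.1 + mn.2 < u ∧ ¬ 2 ∣ Nat.choose mn.1 mn.2}.ncard

/-- `θ₂ = log 3 / log 2`. -/
noncomputable def theta2 : ℝ := Real.log 3 / Real.log 2

/-- `c₂(u) = N₂(u)/u^{θ₂}`. -/
noncomputable def c2 (u : ℕ) : ℝ := (N2 u : ℝ) / (u : ℝ) ^ theta2

open Finset Topology

theorem Nat.odd_choose_iff (m n : ℕ) :
    Odd (m.choose n) ↔ n % 2 ≤ m % 2 ∧ Odd ((m / 2).choose (n / 2)) := by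
  have : Fact (Nat.Prime 2) := ⟨Nat.prime_two⟩
  have lucas : m.choose n % 2 = ((m % 2).choose (n % 2) * (m / 2).choose (n / 2)) % 2 :=
    Choose.choose_modEq_choose_mod_mul_choose_div_nat
  rw [Nat.odd_iff, Nat.odd_iff, lucas]
  rcases Nat.mod_two_eq_zero_or_one m with hm | hm <;>
    rcases Nat.mod_two_eq_zero_or_one n with hn | hn <;> simp [hm, hn]

def oddChoosePairs (u : ℕ) : Finset (ℕ × ℕ) :=
  {mn ∈ range u ×ˢ range u | mn.2 ≤ mn.1 ∧ mn.1 + mn.2 < u ∧ Odd (mn.1.choose mn.2)}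

theorem mem_oddChoosePairs {u : ℕ} {mn : ℕ × ℕ} :
    mn ∈ oddChoosePairs u ↔ mn.2 ≤ mn.1 ∧ mn.1 + mn.2 < u ∧ Odd (mn.1.choose mn.2) := by
  simp only [oddChoosePairs, mem_filter, mem_product, mem_range, and_iff_right_iff_imp]
  omega

theorem N2_eq_card (u : ℕ) : N2 u = #(oddChoosePairs u) := by
  rw [N2, ← Set.ncard_coe_finset]
  congr 1
  ext mn
  simp [mem_oddChoosePairs, Nat.odd_iff]

theorem oddChoosePairs_eq (u : ℕ) :
    oddChoosePairs u =
      ((oddChoosePairs ((u + 1) / 2)).image (fun p => (2 * p.1, 2 * p.2)) ∪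
        (oddChoosePairs (u / 2)).image (fun p => (2 * p.1 + 1, 2 * p.2))) ∪
        (oddChoosePairs ((u - 1) / 2)).image (fun p => (2 * p.1 + 1, 2 * p.2 + 1)) := by
  ext ⟨m, n⟩
  simp only [mem_union, mem_image, mem_oddChoosePairs, Prod.ext_iff, Prod.exists]
  rw [Nat.odd_choose_iff]
  constructor
  · rintro ⟨hnm, hu, hpar, hodd⟩
    rcases Nat.mod_two_eq_zero_or_one m with hm | hm <;>
      rcases Nat.mod_two_eq_zero_or_one n with hn | hn
    · exact .inl (.inl ⟨m / 2, n / 2, ⟨by omega, by omega, hodd⟩, by omega, by omega⟩)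
    · omega
    · exact .inl (.inr ⟨m / 2, n / 2, ⟨by omega, by omega, hodd⟩, by omega, by omega⟩)
    · exact .inr ⟨m / 2, n / 2, ⟨by omega, by omega, hodd⟩, by omega, by omega⟩
  · rintro ((⟨a, b, ⟨hba, hu, hodd⟩, rfl, rfl⟩ | ⟨a, b, ⟨hba, hu, hodd⟩, rfl, rfl⟩) |
      ⟨a, b, ⟨hba, hu, hodd⟩, rfl, rfl⟩) <;>
    refine ⟨by omega, by omega, by omega, ?_⟩ <;> simpa [Nat.mul_add_div] using hodd

theorem card_oddChoosePairs (u : ℕ) :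
    #(oddChoosePairs u) = #(oddChoosePairs ((u + 1) / 2)) + #(oddChoosePairs (u / 2)) +
      #(oddChoosePairs ((u - 1) / 2)) := by
  rw [oddChoosePairs_eq, card_union_of_disjoint, card_union_of_disjoint,
    card_image_of_injective, card_image_of_injective, card_image_of_injective]
  all_goals first
    | intro p q h; simp only [Prod.ext_iff] at h ⊢; omega
    | simp only [disjoint_left, mem_union, mem_image, Prod.exists, Prod.ext_iff]; omega

theorem N2_eq_sum_halves (u : ℕ) :
    N2 u = N2 ((u + 1) / 2) + N2 (u / 2) + N2 ((u - 1) / 2) := by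
  simp only [N2_eq_card, card_oddChoosePairs u]

theorem N2_two_mul {v : ℕ} (hv : 1 ≤ v) : N2 (2 * v) = 2 * N2 v + N2 (v - 1) := by
  rw [N2_eq_sum_halves, show (2 * v + 1) / 2 = v by omega, show 2 * v / 2 = v by omega,
    show (2 * v - 1) / 2 = v - 1 by omega]
  ring

theorem N2_two_mul_sub_one {v : ℕ} (hv : 1 ≤ v) :
    N2 (2 * v - 1) = N2 v + 2 * N2 (v - 1) := by
  rw [N2_eq_sum_halves, show (2 * v - 1 + 1) / 2 = v by omega,
    show (2 * v - 1) / 2 = v - 1 by omega, show (2 * v - 1 - 1) / 2 = v - 1 by omega]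
  ring

theorem two_mul_N2_two_pow_mul {v : ℕ} (hv : 1 ≤ v) (k : ℕ) :
    2 * (N2 (2 ^ k * v) : ℤ) = (3 ^ k + 1) * N2 v + (3 ^ k - 1) * N2 (v - 1) ∧
      2 * (N2 (2 ^ k * v - 1) : ℤ) = (3 ^ k - 1) * N2 v + (3 ^ k + 1) * N2 (v - 1) := by
  induction k with
  | zero => simp
  | succ k ih =>
    have hpos : 1 ≤ 2 ^ k * v := Nat.one_le_iff_ne_zero.mpr (by positivity)
    rw [pow_succ', mul_assoc, N2_two_mul hpos, N2_two_mul_sub_one hpos]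
    push_cast
    exact ⟨by linear_combination 2 * ih.1 + ih.2, by linear_combination ih.1 + 2 * ih.2⟩

theorem N2_zero : N2 0 = 0 := by rw [N2_eq_card]; decide

theorem N2_one : N2 1 = 1 := by rw [N2_eq_card]; decide

theorem N2_two : N2 2 = 2 := by rw [N2_eq_card]; decide

theorem N2_three : N2 3 = 4 := by rw [N2_eq_card]; decide

theorem two_rpow_theta2 : (2 : ℝ) ^ theta2 = 3 := by
  rw [theta2, Real.rpow_def_of_pos two_pos, mul_div_cancel₀ _ (Real.log_pos one_lt_two).ne',
    Real.exp_log three_pos]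

theorem cast_two_pow_mul_rpow_theta2 (k v : ℕ) :
    ((2 ^ k * v : ℕ) : ℝ) ^ theta2 = 3 ^ k * (v : ℝ) ^ theta2 := by
  push_cast
  rw [Real.mul_rpow (by positivity) v.cast_nonneg, ← Real.rpow_pow_comm two_pos.le,
    two_rpow_theta2]

theorem c2_two_pow_mul {v : ℕ} (hv : 1 ≤ v) (k : ℕ) :
    c2 (2 ^ k * v) =
      ((1 + (1 / 3 : ℝ) ^ k) * N2 v + (1 - (1 / 3 : ℝ) ^ k) * N2 (v - 1)) / (2 * v ^ theta2) := by
  have h := congrArg (Int.cast : ℤ → ℝ) (two_mul_N2_two_pow_mul hv k).1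
  push_cast at h
  have hv' : (0 : ℝ) < (v : ℝ) ^ theta2 := by positivity
  rw [c2, cast_two_pow_mul_rpow_theta2, div_pow, one_pow]
  field_simp
  linear_combination h

theorem tendsto_c2_two_pow_mul {v : ℕ} (hv : 1 ≤ v) :
    Tendsto (fun k => c2 (2 ^ k * v)) atTop (𝓝 ((N2 v + N2 (v - 1)) / (2 * v ^ theta2))) := by
  have hpow := tendsto_pow_atTop_nhds_zero_of_lt_one (by norm_num : (0 : ℝ) ≤ 1 / 3)
    (by norm_num)
  have := (((hpow.const_add 1).mul_const (N2 v : ℝ)).add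
    ((hpow.const_sub 1).mul_const (N2 (v - 1) : ℝ))).div_const (2 * (v : ℝ) ^ theta2)
  simpa [c2_two_pow_mul hv] using this

theorem theta2_lt : theta2 < 8 / 5 := by
  have hlog := Real.log_lt_log (by norm_num) (by norm_num : (3 : ℝ) ^ 5 < 2 ^ 8)
  rw [Real.log_pow, Real.log_pow] at hlog
  push_cast at hlog
  rw [theta2, div_lt_iff₀ (Real.log_pos one_lt_two)]
  linarith

theorem three_rpow_one_sub_theta2_ne_half : (3 : ℝ) ^ (1 - theta2) ≠ 1 / 2 := by
  intro h
  have hlog2 := Real.log_pos one_lt_two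
  have hlog3 : Real.log 3 = theta2 * Real.log 2 := by
    rw [theta2, div_mul_cancel₀ _ hlog2.ne']
  have htheta : 0 < theta2 := div_pos (Real.log_pos (by norm_num)) hlog2
  have := congrArg Real.log h
  rw [Real.log_rpow three_pos, one_div, Real.log_inv, hlog3] at this
  have hgolden : (theta2 ^ 2 - theta2 - 1) * Real.log 2 = 0 := by linear_combination -this
  have hneg : theta2 ^ 2 - theta2 - 1 < 0 := by nlinarith [theta2_lt]
  exact (mul_neg_of_neg_of_pos hneg hlog2).ne hgolden

theorem tendsto_c2_two_pow : Tendsto (fun k : ℕ => c2 (2 ^ k)) atTop (𝓝 (1 / 2)) := by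
  simpa [N2_zero, N2_one] using tendsto_c2_two_pow_mul le_rfl

theorem tendsto_c2_three_mul_two_pow :
    Tendsto (fun k : ℕ => c2 (3 * 2 ^ k)) atTop (𝓝 ((3 : ℝ) ^ (1 - theta2))) := by
  have hlim : (N2 3 + N2 (3 - 1) : ℝ) / (2 * (3 : ℝ) ^ theta2) = 3 ^ (1 - theta2) := by
    rw [Real.rpow_sub three_pos, Real.rpow_one, N2_three, N2_two]
    ring
  simpa [mul_comm, hlim] using tendsto_c2_two_pow_mul (v := 3) (by norm_num)

theorem c2_not_convergent :
    Tendsto (fun k : ℕ => c2 (2 ^ k)) atTop (nhds (1 / 2)) ∧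
    Tendsto (fun k : ℕ => c2 (3 * 2 ^ k)) atTop (nhds ((3 : ℝ) ^ (1 - theta2))) ∧
    (3 : ℝ) ^ (1 - theta2) ≠ 1 / 2 ∧
    ¬ ∃ L : ℝ, Tendsto (fun u : ℕ => c2 u) atTop (nhds L) := by
  refine ⟨tendsto_c2_two_pow, tendsto_c2_three_mul_two_pow,
    three_rpow_one_sub_theta2_ne_half, fun ⟨L, hL⟩ => ?_⟩
  have htwo : Tendsto (fun k : ℕ => 2 ^ k) atTop atTop :=
    (pow_right_strictMono₀ one_lt_two).tendsto_atTop
  have hthree : Tendsto (fun k : ℕ => 3 * 2 ^ k) atTop atTop :=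
    tendsto_atTop_mono (fun k => Nat.le_mul_of_pos_left _ three_pos) htwo
  apply three_rpow_one_sub_theta2_ne_half
  rw [tendsto_nhds_unique tendsto_c2_three_mul_two_pow (hL.comp hthree),
    tendsto_nhds_unique tendsto_c2_two_pow (hL.comp htwo)]
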